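/- A binary matroid M is chordal (every circuit with at least 4 elements has a chord) if and only if its Orlik–Solomon algebra is quadratic, i.e., ℑ(𝔠) = ℑ(𝔠₃). -/

import Mathlib

open ExteriorAlgebra

/-- The Grassmann algebra over `K` on generators `e 0, ..., e (n-1)`. -/
abbrev Grass (K : Type) [Field K] (n : ℕ) := ExteriorAlgebra K (Fin n → K)

/-- The generator `e i`. -/
noncomputable def gen (K : Type) [Field K] (n : ℕ) (i : Fin n) : Grass K n :=
  ExteriorAlgebra.ι K (Pi.single i 1)

/-- The monomial associated to a list of indices. -/
noncomputable def monList (K : Type) [Field K] (n : ℕ) (l : List (Fin n)) : Grass K n :=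
  (l.map (gen K n)).prod

/-- The monomial `e_X` of a subset `X ⊆ [n]`, factors in increasing order. -/
noncomputable def mon (K : Type) [Field K] (n : ℕ) (X : Finset (Fin n)) : Grass K n :=
  monList K n (X.sort (· ≤ ·))

/-- The degree `-1` antiderivation `∂` on the Grassmann algebra with `∂ (e i) = 1`
(left contraction with the covector sending each generator to `1`). -/
noncomputable def bd (K : Type) [Field K] (n : ℕ) : Grass K n →ₗ[K] Grass K n :=
  CliffordAlgebra.contractLeft (∑ i : Fin n, LinearMap.proj i)

/-- The two-sided ideal `ℑ(𝔛)` generated by the differentials `∂ e_Y`, `Y ∈ 𝔛`. -/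
noncomputable def OSIdeal (K : Type) [Field K] (n : ℕ) (X : Set (Finset (Fin n))) :
    TwoSidedIdeal (Grass K n) :=
  TwoSidedIdeal.span ((fun Y => bd K n (mon K n Y)) '' X)

/-- A circuit of a matroid: a minimal dependent (finite) set. -/
def IsCircuit {α : Type} [DecidableEq α] (M : Matroid α) (C : Finset α) : Prop :=
  M.Dep (C : Set α) ∧ ∀ D : Finset α, D ⊂ C → ¬ M.Dep (D : Set α)

/-- `i` is a chord of the circuit `C`, witnessed by circuits `C₁, C₂` with
`C₁ ∩ C₂ = {i}` and `C = C₁ Δ C₂`. -/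
def IsChord {α : Type} [DecidableEq α] (M : Matroid α) (C : Finset α) (i : α) : Prop :=
  ∃ C₁ C₂ : Finset α, IsCircuit M C₁ ∧ IsCircuit M C₂ ∧ C₁ ∩ C₂ = {i} ∧ C = symmDiff C₁ C₂

def HasChord {α : Type} [DecidableEq α] (M : Matroid α) (C : Finset α) : Prop :=
  ∃ i, IsChord M C i

/-- `M` is `ℓ`-chordal: every circuit with at least `ℓ` elements has a chord. -/
def Chordal {α : Type} [DecidableEq α] (M : Matroid α) (l : ℕ) : Prop :=
  ∀ C : Finset α, IsCircuit M C → l ≤ C.card → HasChord M C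

/-- `M` is simple: every circuit has at least 3 elements. -/
def SimpleM {α : Type} [DecidableEq α] (M : Matroid α) : Prop :=
  ∀ C : Finset α, IsCircuit M C → 3 ≤ C.card

/-- `M` is binary: the symmetric difference of two distinct circuits contains a circuit. -/
def BinaryM {α : Type} [DecidableEq α] (M : Matroid α) : Prop :=
  ∀ C D : Finset α, IsCircuit M C → IsCircuit M D → C ≠ D →
    ∃ C', IsCircuit M C' ∧ C' ⊆ symmDiff C D

/-- The set `𝔠` of circuits of `M`. -/
def Circuits {α : Type} [DecidableEq α] (M : Matroid α) : Set (Finset α) :=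
  {C | IsCircuit M C}

/-- The set `𝔠_k` of circuits of `M` with at most `k` elements. -/
def CircuitsLe {α : Type} [DecidableEq α] (M : Matroid α) (k : ℕ) : Set (Finset α) :=
  {C | IsCircuit M C ∧ C.card ≤ k}

/-!
If `i` is a chord of `C = C₁ Δ C₂`, write `e_C = ± e_A e_B` with `A = C₁ \ {i}`, `B = C₂ \ {i}`.
The super-Leibniz rule for `∂` gives `∂(e_A e_B) = ∂e_A · ∂(e_i e_B) + ∂(e_A e_i) · ∂e_B`, so
`∂e_C` lies in the ideal generated by `∂e_{C₁}` and `∂e_{C₂}`; as the matroid is simple, `C₁` and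
`C₂` are smaller than `C`, and induction on `|C|` shows that chordality makes `OS(M)` quadratic.

Conversely, in a binary matroid a chordless circuit `C` with `|C| ≥ 4` meets every triangle in at
most one element: otherwise applying the binary axiom twice produces a chord. Write
`e_C = e_c e_D` and let `π` be the algebra endomorphism fixing `e_i` for `i ∈ D` and killing the
other generators. Every triangle has two elements outside `D`, so `π` kills `∂e_T` for each
triangle `T` and hence all of `ℑ(𝔠₃)`, whereas `π(∂e_C) = e_D ≠ 0`.
-/

open Finset

section

variable {α : Type} [DecidableEq α]

lemma symmDiff_eq_erase_union_erase {C₁ C₂ : Finset α} {i : α} (hi : C₁ ∩ C₂ = {i}) :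
    symmDiff C₁ C₂ = C₁.erase i ∪ C₂.erase i := by
  rw [symmDiff_eq_sup_sdiff_inf, inf_eq_inter, hi, sup_eq_union, ← erase_eq, erase_union_distrib]

lemma card_symmDiff_add_two {C₁ C₂ : Finset α} {i : α} (hi : C₁ ∩ C₂ = {i}) :
    #(symmDiff C₁ C₂) + 2 = #C₁ + #C₂ := by
  have h₁ := card_union_add_card_inter C₁ C₂
  have h₂ := card_le_card (inter_subset_union (s := C₁) (t := C₂))
  rw [symmDiff_eq_sup_sdiff_inf, sup_eq_union, inf_eq_inter,
    card_sdiff_of_subset inter_subset_union]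
  simp only [hi, card_singleton] at h₁ h₂ ⊢
  omega

variable {M : Matroid α}

lemma IsCircuit.eq_of_subset {C C' : Finset α} (hC : IsCircuit M C) (hC' : IsCircuit M C')
    (h : C' ⊆ C) : C' = C := by
  by_contra hne
  exact hC.2 C' (Finset.ssubset_iff_subset_ne.2 ⟨h, hne⟩) hC'.1

theorem card_inter_le_one_of_not_hasChord (hb : BinaryM M) {C T : Finset α}
    (hC : IsCircuit M C) (h4 : 4 ≤ #C) (hnch : ¬ HasChord M C) (hT : IsCircuit M T)
    (hT3 : #T = 3) : #(T ∩ C) ≤ 1 := by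
  by_contra! hcard
  obtain ⟨a, haTC, b, hbTC, hab⟩ := one_lt_card.1 hcard
  rw [mem_inter] at haTC hbTC
  obtain ⟨t, htT, htC⟩ := not_subset.1 fun hTC => by
    rw [hC.eq_of_subset hT hTC] at hT3
    omega
  obtain rfl : {a, b, t} = T := eq_of_subset_of_card_le (by grind) (by
    rw [hT3, card_insert_of_notMem (by grind), card_pair (by grind)])
  obtain ⟨C', hC', hC'sub⟩ := hb C _ hC hT (by grind)
  have haC' : a ∉ C' := fun h => by simpa [mem_symmDiff, haTC.2] using hC'sub h
  have hbC' : b ∉ C' := fun h => by simpa [mem_symmDiff, hbTC.2] using hC'sub h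
  have htC' : t ∈ C' := by
    by_contra htC'
    have hC'C : C' ⊆ C := fun x hx => by
      have := hC'sub hx
      simp only [mem_symmDiff] at this
      grind
    exact haC' (hC.eq_of_subset hC' hC'C ▸ haTC.2)
  have hsub : symmDiff {a, b, t} C' ⊆ C := fun x hx => by
    have := @hC'sub x
    simp only [mem_symmDiff] at hx this
    grind
  -- `T Δ C' ⊆ C` contains a circuit, which can only be `C`; hence `t` is a chord of `C`.
  obtain ⟨C'', hC'', hC''sub⟩ := hb _ C' hT hC' (by grind)
  have hC''eq := hC.eq_of_subset hC'' (hC''sub.trans hsub)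
  refine hnch ⟨t, _, C', hT, hC', ?_, (hC''eq ▸ hC''sub).antisymm hsub⟩
  ext x
  grind

end

lemma TwoSidedIdeal.units_int_smul_mem_iff {R : Type*} [Ring R] (I : TwoSidedIdeal R) (ε : ℤˣ)
    {x : R} : ε • x ∈ I ↔ x ∈ I := by
  rcases Int.units_eq_one_or ε with rfl | rfl <;> simp [neg_mem_iff]

section

variable {K : Type} [Field K] {n : ℕ}

lemma monList_cons (a : Fin n) (l : List (Fin n)) :
    monList K n (a :: l) = gen K n a * monList K n l := by
  simp [monList]

lemma monList_append (l₁ l₂ : List (Fin n)) :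
    monList K n (l₁ ++ l₂) = monList K n l₁ * monList K n l₂ := by
  simp [monList]

lemma gen_mul_gen_comm (a b : Fin n) : gen K n a * gen K n b = -(gen K n b * gen K n a) :=
  eq_neg_of_add_eq_zero_left (ExteriorAlgebra.ι_add_mul_swap _ _)

lemma monList_perm {l l' : List (Fin n)} (h : l.Perm l') :
    ∃ ε : ℤˣ, monList K n l = ε • monList K n l' := by
  induction h with
  | nil => exact ⟨1, (one_smul _ _).symm⟩
  | cons a _ ih =>
    obtain ⟨ε, hε⟩ := ih
    exact ⟨ε, by rw [monList_cons, monList_cons, hε, mul_smul_comm]⟩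
  | swap a b l =>
    refine ⟨-1, ?_⟩
    simp only [monList_cons, ← mul_assoc, gen_mul_gen_comm b a, neg_mul, Units.neg_smul, one_smul]
  | trans _ _ ih₁ ih₂ =>
    obtain ⟨ε, hε⟩ := ih₁
    obtain ⟨ε', hε'⟩ := ih₂
    exact ⟨ε * ε', by rw [hε, hε', mul_smul]⟩

lemma mon_toFinset_eq_smul {l : List (Fin n)} (hl : l.Nodup) :
    ∃ ε : ℤˣ, mon K n l.toFinset = ε • monList K n l :=
  monList_perm (List.perm_of_nodup_nodup_toFinset_eq (sort_nodup _ _) hl (sort_toFinset _ _))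

lemma contractLeft_gen_mul (d : Module.Dual K (Fin n → K)) (a : Fin n) (x : Grass K n) :
    CliffordAlgebra.contractLeft d (gen K n a * x)
      = d (Pi.single a 1) • x - gen K n a * CliffordAlgebra.contractLeft d x :=
  CliffordAlgebra.contractLeft_ι_mul _ _ _

lemma contractLeft_monList_eq_zero (d : Module.Dual K (Fin n → K)) {l : List (Fin n)}
    (h : ∀ a ∈ l, d (Pi.single a 1) = 0) :
    CliffordAlgebra.contractLeft d (monList K n l) = 0 := by
  induction l with
  | nil => exact CliffordAlgebra.contractLeft_one _ d
  | cons a t ih =>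
    rw [monList_cons, contractLeft_gen_mul, h a List.mem_cons_self,
      ih fun b hb => h b (List.mem_cons_of_mem a hb)]
    simp

lemma monList_ne_zero {l : List (Fin n)} (hl : l.Nodup) : monList K n l ≠ 0 := by
  induction l with
  | nil => exact one_ne_zero
  | cons a t ih =>
    rw [List.nodup_cons] at hl
    intro h0
    have := congrArg (CliffordAlgebra.contractLeft (LinearMap.proj a)) h0
    rw [monList_cons, contractLeft_gen_mul, contractLeft_monList_eq_zero] at this
    · exact ih hl.2 (by simpa using this)
    · intro b hb
      simp [show b ≠ a from fun h => hl.1 (h ▸ hb)]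

lemma bd_gen_mul (a : Fin n) (x : Grass K n) :
    bd K n (gen K n a * x) = x - gen K n a * bd K n x := by
  rw [bd, contractLeft_gen_mul]
  simp

lemma bd_one : bd K n 1 = 0 := CliffordAlgebra.contractLeft_one _ _

lemma bd_gen (a : Fin n) : bd K n (gen K n a) = 1 := by
  simpa [bd_one] using bd_gen_mul (K := K) a 1

lemma bd_monList_mul (l : List (Fin n)) (y : Grass K n) :
    bd K n (monList K n l * y)
      = bd K n (monList K n l) * y + ((-1 : K) ^ l.length) • (monList K n l * bd K n y) := by
  induction l with
  | nil => simp [monList, bd_one]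
  | cons a t ih =>
    rw [monList_cons, mul_assoc, bd_gen_mul, ih, bd_gen_mul, List.length_cons, pow_succ]
    simp only [mul_add, sub_mul, mul_smul_comm, mul_assoc, mul_neg_one, neg_smul]
    abel

lemma bd_monList_append (l₁ l₂ : List (Fin n)) (i : Fin n) :
    bd K n (monList K n (l₁ ++ l₂))
      = bd K n (monList K n l₁) * bd K n (monList K n (i :: l₂))
        + bd K n (monList K n (l₁ ++ [i])) * bd K n (monList K n l₂) := by
  have hi : monList K n [i] = gen K n i := by simp [monList]
  rw [monList_append, bd_monList_mul, monList_cons, bd_gen_mul, monList_append,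
    bd_monList_mul, hi, bd_gen]
  simp only [mul_sub, add_mul, mul_one, mul_assoc, smul_mul_assoc]
  abel

lemma bd_mon_toFinset_mem_iff (I : TwoSidedIdeal (Grass K n)) {l : List (Fin n)}
    (hl : l.Nodup) : bd K n (mon K n l.toFinset) ∈ I ↔ bd K n (monList K n l) ∈ I := by
  obtain ⟨ε, hε⟩ := mon_toFinset_eq_smul (K := K) hl
  rw [hε, LinearMap.map_smul_of_tower, TwoSidedIdeal.units_int_smul_mem_iff]

lemma bd_monList_append_mem {I : TwoSidedIdeal (Grass K n)} {l₁ l₂ : List (Fin n)} {i : Fin n}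
    (h₁ : bd K n (monList K n (l₁ ++ [i])) ∈ I) (h₂ : bd K n (monList K n (i :: l₂)) ∈ I) :
    bd K n (monList K n (l₁ ++ l₂)) ∈ I := by
  rw [bd_monList_append l₁ l₂ i]
  exact I.add_mem (I.mul_mem_left _ _ h₂) (I.mul_mem_right _ _ h₁)

lemma bd_mon_symmDiff_mem {I : TwoSidedIdeal (Grass K n)} {C₁ C₂ : Finset (Fin n)} {i : Fin n}
    (hi : C₁ ∩ C₂ = {i}) (h₁ : bd K n (mon K n C₁) ∈ I) (h₂ : bd K n (mon K n C₂) ∈ I) :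
    bd K n (mon K n (symmDiff C₁ C₂)) ∈ I := by
  have hiC : i ∈ C₁ ∧ i ∈ C₂ := by simpa using hi.ge (mem_singleton_self i)
  have hdisj : Disjoint (C₁.erase i) (C₂.erase i) := by
    refine disjoint_left.2 fun x hx₁ hx₂ => (mem_erase.1 hx₁).1 ?_
    simpa [hi] using mem_inter.2 ⟨(mem_erase.1 hx₁).2, (mem_erase.1 hx₂).2⟩
  set l₁ := (C₁.erase i).toList
  set l₂ := (C₂.erase i).toList
  have hl₁ : (l₁ ++ [i]).Nodup ∧ (l₁ ++ [i]).toFinset = C₁ := by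
    refine ⟨(nodup_toList _).append (List.nodup_singleton i) (by simp), ?_⟩
    simp [l₁, insert_erase hiC.1]
  have hl₂ : (i :: l₂).Nodup ∧ (i :: l₂).toFinset = C₂ := by
    refine ⟨List.nodup_cons.2 ⟨by simp [l₂], nodup_toList _⟩, ?_⟩
    simp [l₂, insert_erase hiC.2]
  have hl : (l₁ ++ l₂).Nodup ∧ (l₁ ++ l₂).toFinset = symmDiff C₁ C₂ := by
    refine ⟨(nodup_toList _).append (nodup_toList _) ?_, ?_⟩
    · exact fun x h₁ h₂ => disjoint_left.1 hdisj (mem_toList.1 h₁) (mem_toList.1 h₂)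
    · simp [l₁, l₂, symmDiff_eq_erase_union_erase hi]
  rw [← hl₁.2, bd_mon_toFinset_mem_iff I hl₁.1] at h₁
  rw [← hl₂.2, bd_mon_toFinset_mem_iff I hl₂.1] at h₂
  rw [← hl.2, bd_mon_toFinset_mem_iff I hl.1]
  exact bd_monList_append_mem h₁ h₂

variable {M : Matroid (Fin n)}

theorem bd_mon_mem_OSIdeal_circuitsLe_of_chordal (hs : SimpleM M) (hch : Chordal M 4)
    {C : Finset (Fin n)} (hC : IsCircuit M C) :
    bd K n (mon K n C) ∈ OSIdeal K n (CircuitsLe M 3) := by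
  induction h : #C using Nat.strong_induction_on generalizing C with
  | _ m ih =>
  by_cases h3 : #C ≤ 3
  · exact TwoSidedIdeal.subset_span ⟨C, ⟨hC, h3⟩, rfl⟩
  obtain ⟨i, C₁, C₂, hC₁, hC₂, hi, rfl⟩ := hch C hC (by omega)
  have := card_symmDiff_add_two hi
  have := hs _ hC₁
  have := hs _ hC₂
  exact bd_mon_symmDiff_mem hi (ih _ (by omega) hC₁ rfl) (ih _ (by omega) hC₂ rfl)

variable (K) in
noncomputable def restrictTo (D : Finset (Fin n)) : Grass K n →ₐ[K] Grass K n :=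
  ExteriorAlgebra.map (LinearMap.pi fun i => if i ∈ D then LinearMap.proj i else 0)

lemma restrictTo_gen (D : Finset (Fin n)) (i : Fin n) :
    restrictTo K D (gen K n i) = if i ∈ D then gen K n i else 0 := by
  have hproj : (LinearMap.pi fun j => if j ∈ D then LinearMap.proj j else 0 :
      (Fin n → K) →ₗ[K] Fin n → K) (Pi.single i 1) = if i ∈ D then Pi.single i 1 else 0 := by
    ext j
    by_cases hj : j = i <;> by_cases hjD : j ∈ D <;> simp_all [ite_apply]
  rw [restrictTo, gen, ExteriorAlgebra.map_apply_ι, hproj]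
  split_ifs <;> simp

lemma restrictTo_monList_of_subset {D : Finset (Fin n)} {l : List (Fin n)}
    (h : ∀ a ∈ l, a ∈ D) : restrictTo K D (monList K n l) = monList K n l := by
  rw [monList, map_list_prod, List.map_map]
  exact congrArg List.prod (List.map_congr_left fun a ha => by simp [restrictTo_gen, h a ha])

lemma restrictTo_monList_eq_zero {D : Finset (Fin n)} {l : List (Fin n)} (h : ∃ a ∈ l, a ∉ D) :
    restrictTo K D (monList K n l) = 0 := by
  obtain ⟨a, ha, haD⟩ := h
  rw [monList, map_list_prod]
  refine List.prod_eq_zero (List.mem_map.2 ⟨gen K n a, List.mem_map_of_mem ha, ?_⟩)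
  simp [restrictTo_gen, haD]

lemma restrictTo_bd_monList_eq_zero {D : Finset (Fin n)} {l : List (Fin n)}
    (h : 2 ≤ l.countP (· ∉ D)) : restrictTo K D (bd K n (monList K n l)) = 0 := by
  induction l with
  | nil => simp at h
  | cons a t ih =>
    rw [monList_cons, bd_gen_mul, map_sub, map_mul]
    by_cases ha : a ∈ D
    · rw [List.countP_cons_of_neg (by simpa)] at h
      rw [ih h, restrictTo_monList_eq_zero, mul_zero, sub_zero]
      simpa using List.countP_pos_iff.1 (by omega : 0 < t.countP (· ∉ D))
    · rw [List.countP_cons_of_pos (by simpa)] at h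
      rw [restrictTo_gen, if_neg ha, zero_mul, sub_zero, restrictTo_monList_eq_zero]
      simpa using List.countP_pos_iff.1 (by omega : 0 < t.countP (· ∉ D))

lemma restrictTo_bd_mon_eq_zero {D X : Finset (Fin n)} (h : 2 ≤ #(X \ D)) :
    restrictTo K D (bd K n (mon K n X)) = 0 := by
  refine restrictTo_bd_monList_eq_zero ?_
  have hnd := (sort_nodup X (· ≤ ·)).filter (fun x => decide (x ∉ D))
  rw [List.countP_eq_length_filter, ← List.toFinset_card_of_nodup hnd, List.toFinset_filter,
    sort_toFinset]
  simpa [sdiff_eq_filter] using h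

lemma OSIdeal_le_ker_restrictTo {X : Set (Finset (Fin n))} {D : Finset (Fin n)}
    (h : ∀ T ∈ X, 2 ≤ #(T \ D)) : OSIdeal K n X ≤ TwoSidedIdeal.ker (restrictTo K D) :=
  TwoSidedIdeal.span_le.2 <| by
    rintro _ ⟨T, hT, rfl⟩
    exact (TwoSidedIdeal.mem_ker _).2 (restrictTo_bd_mon_eq_zero (h T hT))

lemma exists_restrictTo_bd_mon_ne_zero {C : Finset (Fin n)} (hC : C.Nonempty) :
    ∃ D ⊆ C, restrictTo K D (bd K n (mon K n C)) ≠ 0 := by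
  obtain ⟨c, t, hct⟩ := List.exists_cons_of_length_pos (l := C.sort (· ≤ ·))
    (by rw [length_sort]; exact hC.card_pos)
  have hnd : (c :: t).Nodup := hct ▸ sort_nodup _ _
  have hsub : t.toFinset ⊆ C := fun x hx => by
    rw [← mem_sort (· ≤ ·), hct]
    exact List.mem_cons_of_mem _ (List.mem_toFinset.1 hx)
  refine ⟨t.toFinset, hsub, ?_⟩
  rw [mon, hct, monList_cons, bd_gen_mul, map_sub, map_mul, restrictTo_gen,
    if_neg (by simpa using (List.nodup_cons.1 hnd).1), zero_mul, sub_zero,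
    restrictTo_monList_of_subset fun a ha => List.mem_toFinset.2 ha]
  exact monList_ne_zero (List.nodup_cons.1 hnd).2

theorem bd_mon_not_mem_OSIdeal_circuitsLe (hs : SimpleM M) (hb : BinaryM M) {C : Finset (Fin n)}
    (hC : IsCircuit M C) (h4 : 4 ≤ #C) (hnch : ¬ HasChord M C) :
    bd K n (mon K n C) ∉ OSIdeal K n (CircuitsLe M 3) := by
  obtain ⟨D, hDC, hD⟩ :=
    exists_restrictTo_bd_mon_ne_zero (K := K) (C := C) (card_pos.1 (by omega))
  refine fun hmem => hD ((TwoSidedIdeal.mem_ker _).1 (OSIdeal_le_ker_restrictTo ?_ hmem))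
  rintro T ⟨hT, hT3⟩
  have h3 : #T = 3 := le_antisymm hT3 (hs T hT)
  have h1 := card_inter_le_one_of_not_hasChord hb hC h4 hnch hT h3
  have := card_le_card (inter_subset_inter_left (s := T) hDC)
  have := card_sdiff_add_card_inter T D
  omega

end

theorem stmt12_general (K : Type) [Field K] (n : ℕ) (M : Matroid (Fin n))
    (hs : SimpleM M) (hb : BinaryM M) :
    Chordal M 4 ↔ OSIdeal K n (Circuits M) = OSIdeal K n (CircuitsLe M 3) := by
  refine ⟨fun hch => le_antisymm ?_ ?_, fun heq C hC h4 => ?_⟩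
  · exact TwoSidedIdeal.span_le.2 <| by
      rintro _ ⟨C, hC, rfl⟩
      exact bd_mon_mem_OSIdeal_circuitsLe_of_chordal hs hch hC
  · exact TwoSidedIdeal.span_mono (Set.image_mono fun C hC => hC.1)
  · by_contra hnch
    refine bd_mon_not_mem_OSIdeal_circuitsLe (K := K) hs hb hC h4 hnch ?_
    exact heq ▸ TwoSidedIdeal.subset_span (Set.mem_image_of_mem _ hC)

/-- a binary matroid `M` is chordal (4-chordal) iff `OS(M)` is quadratic,
i.e. `ℑ(𝔠) = ℑ(𝔠₃)`. -/
theorem stmt12 (K : Type) [Field K] (n : ℕ) (M : Matroid (Fin n)) (hE : M.E = Set.univ)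
    (hs : SimpleM M) (hb : BinaryM M) :
    Chordal M 4 ↔ OSIdeal K n (Circuits M) = OSIdeal K n (CircuitsLe M 3) :=
  stmt12_general K n M hs hb
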